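/- arXiv:1005.0016 — 2 statements merged into one kernel-verified Lean document; each statement's English description precedes it below -/
import Mathlib

section
/- In any orthomodular lattice, the 3OA law (a₁ → a₃) ∩ (a₁ ≡₃ a₂) ≤ a₂ → a₃, where a₁ ≡₃ a₂ := ((a₁→a₃) ∩ (a₂→a₃)) ∪ ((a₁'→a₃) ∩ (a₂'→a₃)), holds if and only if the equation a ∩ ((a ∩ b) ∪ ((a→c) ∩ (b→c))) ≤ b' → c holds. -/
/-- An orthomodular lattice. -/
class OrthomodularLattice (α : Type*) extends Lattice α, BoundedOrder α, Compl α where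
  sup_compl : ∀ a : α, a ⊔ aᶜ = ⊤
  inf_compl : ∀ a : α, a ⊓ aᶜ = ⊥
  compl_antitone : ∀ a b : α, a ≤ b → bᶜ ≤ aᶜ
  compl_compl : ∀ a : α, aᶜᶜ = a
  orthomodular : ∀ a b : α, a ≤ b → b = a ⊔ (aᶜ ⊓ b)

/-- The Sasaki hook `a → b := a' ∪ (a ∩ b)`. -/
def shook {α : Type*} [OrthomodularLattice α] (a b : α) : α := aᶜ ⊔ (a ⊓ b)

/-!
The two laws are substitution instances of each other. Putting `a₁ := a'`, `a₂ := b'`,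
`a₃ := c` in the 3OA law and using `a ≤ a' → c`, `b ≤ b' → c` gives the equation.
Conversely, putting `a := a₁ → a₃`, `b := a₂ → a₃`, `c := a₃` in the equation and using
`(a → c) → c = a' → c` and `(a → c)' → c = a → c` gives the 3OA law.
-/

namespace OrthomodularLattice

variable {α : Type*} [OrthomodularLattice α]

theorem compl_le_compl {a b : α} (h : a ≤ b) : bᶜ ≤ aᶜ :=
  compl_antitone a b h

theorem le_compl_comm {a b : α} (h : a ≤ bᶜ) : b ≤ aᶜ := by
  simpa only [compl_compl] using compl_le_compl h

theorem eq_bot_of_le_of_le_compl {x y : α} (h : x ≤ y) (hc : x ≤ yᶜ) : x = ⊥ :=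
  le_bot_iff.mp (inf_compl y ▸ le_inf h hc)

theorem compl_sup (a b : α) : (a ⊔ b)ᶜ = aᶜ ⊓ bᶜ :=
  le_antisymm (le_inf (compl_le_compl le_sup_left) (compl_le_compl le_sup_right))
    (le_compl_comm (sup_le (le_compl_comm inf_le_left) (le_compl_comm inf_le_right)))

theorem compl_inf (a b : α) : (a ⊓ b)ᶜ = aᶜ ⊔ bᶜ := by
  simpa only [compl_compl] using (congrArg compl (compl_sup aᶜ bᶜ)).symm

theorem inf_compl_sup_of_le {t c : α} (h : t ≤ c) : c ⊓ (cᶜ ⊔ t) = t := by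
  have := congrArg compl (orthomodular cᶜ tᶜ (compl_le_compl h))
  rwa [compl_compl, compl_sup, compl_inf, compl_compl, compl_compl, eq_comm] at this

theorem compl_shook (a c : α) : (shook a c)ᶜ = a ⊓ (a ⊓ c)ᶜ := by
  rw [shook, compl_sup, compl_compl]

theorem le_shook_compl (a c : α) : a ≤ shook aᶜ c := by
  rw [shook, compl_compl]
  exact le_sup_left

theorem shook_inf_self (a c : α) : shook a c ⊓ c = a ⊓ c ⊔ aᶜ ⊓ c := by
  set m := a ⊓ c
  refine le_antisymm ?_
    (sup_le (le_inf le_sup_right inf_le_right) (inf_le_inf_right c le_sup_left))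
  -- orthomodularity splits off `m`; what remains lies in `mᶜ ⊓ (aᶜ ⊔ m) = aᶜ`
  have hm : m ≤ shook a c ⊓ c := le_inf le_sup_right inf_le_right
  have hcompl : mᶜ ⊓ (aᶜ ⊔ m) = aᶜ := by
    simpa only [compl_compl, sup_comm] using
      inf_compl_sup_of_le (compl_le_compl (inf_le_left : m ≤ a))
  have hrest : mᶜ ⊓ (shook a c ⊓ c) ≤ aᶜ ⊓ c :=
    le_inf (hcompl ▸ inf_le_inf_left _ inf_le_left) (inf_le_right.trans inf_le_right)
  rw [orthomodular _ _ hm]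
  exact sup_le_sup_left hrest m

theorem shook_shook (a c : α) : shook (shook a c) c = shook aᶜ c := by
  have ha : a = a ⊓ c ⊔ (a ⊓ c)ᶜ ⊓ a := orthomodular _ _ inf_le_left
  rw [shook, compl_shook, shook_inf_self, shook, compl_compl, ← sup_assoc, sup_comm (a ⊓ _),
    inf_comm a (a ⊓ c)ᶜ, ← ha]

theorem shook_compl_shook (a c : α) : shook (shook a c)ᶜ c = shook a c := by
  have hbot : (shook a c)ᶜ ⊓ c = ⊥ := by
    rw [compl_shook]
    exact eq_bot_of_le_of_le_compl (le_inf (inf_le_left.trans inf_le_left) inf_le_right)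
      (inf_le_left.trans inf_le_right)
  rw [shook, compl_compl, hbot, sup_bot_eq]

end OrthomodularLattice

/-- In any orthomodular lattice, the 3OA law
`(a₁→a₃) ∩ (a₁ ≡₃ a₂) ≤ a₂→a₃` holds iff the equation
`a ∩ ((a ∩ b) ∪ ((a→c) ∩ (b→c))) ≤ b' → c` holds. -/
theorem stmt_8 {α : Type*} [OrthomodularLattice α] :
    (∀ a₁ a₂ a₃ : α,
      shook a₁ a₃ ⊓ ((shook a₁ a₃ ⊓ shook a₂ a₃) ⊔ (shook a₁ᶜ a₃ ⊓ shook a₂ᶜ a₃)) ≤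
        shook a₂ a₃) ↔
    (∀ a b c : α, a ⊓ ((a ⊓ b) ⊔ (shook a c ⊓ shook b c)) ≤ shook bᶜ c) := by
  constructor
  · intro h3OA a b c
    have h := h3OA aᶜ bᶜ c
    rw [OrthomodularLattice.compl_compl, OrthomodularLattice.compl_compl] at h
    refine le_trans ?_ h
    have ha := OrthomodularLattice.le_shook_compl a c
    have hb := OrthomodularLattice.le_shook_compl b c
    exact inf_le_inf ha (sup_le_sup_right (inf_le_inf ha hb) _)
  · intro hEq a₁ a₂ a₃
    simpa only [OrthomodularLattice.shook_shook, OrthomodularLattice.shook_compl_shook] using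
      hEq (shook a₁ a₃) (shook a₂ a₃) a₃
end

section
/- In any orthomodular lattice satisfying the 3OA law, the inequality a ∩ ((a ∩ b) ∪ ((a→c) ∩ (b→c))) ≤ b' → c holds. -/
theorem le_shook_compl {α : Type*} [OrthomodularLattice α] (x y : α) : x ≤ shook xᶜ y := by
  rw [shook, OrthomodularLattice.compl_compl]
  exact le_sup_left

/-- In any orthomodular lattice satisfying the 3OA law,
`a ∩ ((a ∩ b) ∪ ((a→c) ∩ (b→c))) ≤ b' → c`. -/
theorem stmt_9 {α : Type*} [OrthomodularLattice α]
    (h3OA : ∀ a b c : α,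
      shook a c ⊓ ((shook a c ⊓ shook b c) ⊔ (shook aᶜ c ⊓ shook bᶜ c)) ≤ shook b c) :
    ∀ a b c : α, a ⊓ ((a ⊓ b) ⊔ (shook a c ⊓ shook b c)) ≤ shook bᶜ c := by
  intro a b c
  calc a ⊓ ((a ⊓ b) ⊔ (shook a c ⊓ shook b c))
      ≤ shook aᶜ c ⊓ ((shook aᶜ c ⊓ shook bᶜ c) ⊔ (shook aᶜᶜ c ⊓ shook bᶜᶜ c)) := by
        simp only [OrthomodularLattice.compl_compl]
        gcongr <;> exact le_shook_compl _ _
    _ ≤ shook bᶜ c := h3OA aᶜ bᶜ c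
end
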